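/- arXiv:0711.1476 — 3 statements merged into one kernel-verified Lean document; each statement's English description precedes it below -/
import Mathlib

section
/- Let b ≥ 0 and ι ≥ 0 be real numbers and set ρ = b + ι. For every real t > 0 and every complex δ, the function u(t) = |sinh t|^δ = (sinh t)^δ satisfies u''(t) + (2b·coth t + 2ι·coth 2t)·u'(t) − δ(δ + 2ρ)·u(t) = δ(δ − 1 + ι + 2b)·(sinh t)^{δ−2}. -/
/-!
With `u = (sinh t)^δ` one has `u' = δ coth t · u` and, since `coth' = 1 - coth²` and
`coth² = 1 + sinh⁻²`, `u'' = δ² u + δ(δ - 1) u / sinh² t`. Writing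
`coth 2t = (cosh² t + sinh² t) / (2 sinh t cosh t)`, every term of the left-hand side is a
multiple of `u`, and `cosh² - sinh² = 1` collapses it to `δ(δ - 1 + ι + 2b) u / sinh² t`.
-/

open Real

/-- `(sinh s)^δ`, defined through the real logarithm (so `log |sinh s|` for `s < 0`). -/
noncomputable def sinhCpow (δ : ℂ) (s : ℝ) : ℂ :=
  Complex.exp (δ * (log (sinh s) : ℂ))

theorem sinhCpow_sub_two (δ : ℂ) {t : ℝ} (ht : t ≠ 0) :
    sinhCpow (δ - 2) t = sinhCpow δ t / (sinh t : ℂ) ^ 2 := by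
  have exp_two_log : Complex.exp (2 * (log (sinh t) : ℂ)) = (sinh t : ℂ) ^ 2 := by
    rw [two_mul, Complex.exp_add, ← Complex.ofReal_exp, exp_log_eq_abs (sinh_ne_zero.mpr ht)]
    exact_mod_cast (sq (sinh t) ▸ abs_mul_abs_self (sinh t))
  rw [sinhCpow, sinhCpow, sub_mul, Complex.exp_sub, exp_two_log]

theorem hasDerivAt_sinhCpow (δ : ℂ) {s : ℝ} (hs : s ≠ 0) :
    HasDerivAt (sinhCpow δ) (δ * (cosh s / sinh s : ℝ) * sinhCpow δ s) s := by
  have hlog : HasDerivAt (fun x => log (sinh x)) (cosh s / sinh s) s :=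
    (hasDerivAt_sinh s).log (sinh_ne_zero.mpr hs)
  exact (hlog.ofReal_comp.const_mul δ).cexp.congr_deriv (mul_comm _ _)

theorem deriv_sinhCpow (δ : ℂ) {s : ℝ} (hs : s ≠ 0) :
    deriv (sinhCpow δ) s = δ * (cosh s / sinh s : ℝ) * sinhCpow δ s :=
  (hasDerivAt_sinhCpow δ hs).deriv

theorem deriv_deriv_sinhCpow (δ : ℂ) {t : ℝ} (ht : t ≠ 0) :
    deriv (deriv (sinhCpow δ)) t
      = δ ^ 2 * sinhCpow δ t + δ * (δ - 1) * sinhCpow δ t / (sinh t : ℂ) ^ 2 := by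
  have hS : sinh t ≠ 0 := sinh_ne_zero.mpr ht
  have deriv_eventuallyEq :
      deriv (sinhCpow δ) =ᶠ[nhds t] fun s => δ * (cosh s / sinh s : ℝ) * sinhCpow δ s := by
    filter_upwards [isOpen_ne.mem_nhds ht] with s hs using deriv_sinhCpow δ hs
  have hcoth : HasDerivAt (fun s => cosh s / sinh s)
      ((sinh t * sinh t - cosh t * cosh t) / sinh t ^ 2) t :=
    (hasDerivAt_cosh t).div (hasDerivAt_sinh t) hS
  rw [deriv_eventuallyEq.deriv_eq]
  refine ((hcoth.ofReal_comp.const_mul δ).mul (hasDerivAt_sinhCpow δ ht)).deriv.trans ?_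
  have hSC : (sinh t : ℂ) ≠ 0 := by exact_mod_cast hS
  have hsq : (cosh t : ℂ) ^ 2 = (sinh t : ℂ) ^ 2 + 1 := by exact_mod_cast cosh_sq t
  simp only [Complex.ofReal_div, Complex.ofReal_sub, Complex.ofReal_mul, Complex.ofReal_pow]
  field_simp
  linear_combination δ * (δ - 1) * sinhCpow δ t * hsq

theorem rank_one_BS_sinh_general (b ι : ℝ) (t : ℝ) (ht : 0 < t) (δ : ℂ) :
    deriv (deriv (fun s : ℝ => Complex.exp (δ * (Real.log (Real.sinh s) : ℂ)))) t
      + ((2 * b * (Real.cosh t / Real.sinh t)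
            + 2 * ι * (Real.cosh (2 * t) / Real.sinh (2 * t)) : ℝ) : ℂ)
          * deriv (fun s : ℝ => Complex.exp (δ * (Real.log (Real.sinh s) : ℂ))) t
      - δ * (δ + 2 * ((b : ℂ) + (ι : ℂ)))
          * Complex.exp (δ * (Real.log (Real.sinh t) : ℂ))
    = δ * (δ - 1 + (ι : ℂ) + 2 * (b : ℂ))
        * Complex.exp ((δ - 2) * (Real.log (Real.sinh t) : ℂ)) := by
  change deriv (deriv (sinhCpow δ)) t
      + ((2 * b * (cosh t / sinh t) + 2 * ι * (cosh (2 * t) / sinh (2 * t)) : ℝ) : ℂ)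
          * deriv (sinhCpow δ) t
      - δ * (δ + 2 * ((b : ℂ) + (ι : ℂ))) * sinhCpow δ t
    = δ * (δ - 1 + (ι : ℂ) + 2 * (b : ℂ)) * sinhCpow (δ - 2) t
  rw [deriv_deriv_sinhCpow δ ht.ne', deriv_sinhCpow δ ht.ne', sinhCpow_sub_two δ ht.ne',
    cosh_two_mul, sinh_two_mul]
  have hSC : (sinh t : ℂ) ≠ 0 := by exact_mod_cast (sinh_pos_iff.mpr ht).ne'
  have hCC : (cosh t : ℂ) ≠ 0 := by exact_mod_cast (cosh_pos t).ne'
  have hsq : (cosh t : ℂ) ^ 2 = (sinh t : ℂ) ^ 2 + 1 := by exact_mod_cast cosh_sq t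
  simp only [Complex.ofReal_add, Complex.ofReal_mul, Complex.ofReal_div, Complex.ofReal_pow,
    Complex.ofReal_ofNat]
  field_simp
  linear_combination δ * (2 * b + ι) * sinhCpow δ t * hsq

/-- Rank-one Bernstein–Sato identity for `u(t) = (sinh t)^δ`, `t > 0`:
`u'' + (2b coth t + 2ι coth 2t) u' − δ(δ+2ρ) u = δ(δ−1+ι+2b)(sinh t)^{δ−2}`,
where `ρ = b + ι`. -/
theorem rank_one_BS_sinh (b ι : ℝ) (hb : 0 ≤ b) (hι : 0 ≤ ι) (t : ℝ) (ht : 0 < t) (δ : ℂ) :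
    deriv (deriv (fun s : ℝ => Complex.exp (δ * (Real.log (Real.sinh s) : ℂ)))) t
      + ((2 * b * (Real.cosh t / Real.sinh t)
            + 2 * ι * (Real.cosh (2 * t) / Real.sinh (2 * t)) : ℝ) : ℂ)
          * deriv (fun s : ℝ => Complex.exp (δ * (Real.log (Real.sinh s) : ℂ))) t
      - δ * (δ + 2 * ((b : ℂ) + (ι : ℂ)))
          * Complex.exp (δ * (Real.log (Real.sinh t) : ℂ))
    = δ * (δ - 1 + (ι : ℂ) + 2 * (b : ℂ))
        * Complex.exp ((δ - 2) * (Real.log (Real.sinh t) : ℂ)) :=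
  rank_one_BS_sinh_general b ι t ht δ
end

section
/- Let b ≥ 0 and ι ≥ 0 be real numbers and set ρ = b + ι. For every real t > 0 and every complex δ, the function v(t) = (cosh t)^δ satisfies v''(t) + (2b·coth t + 2ι·coth 2t)·v'(t) − δ(δ + 2ρ)·v(t) = −δ(δ − 1 + ι)·(cosh t)^{δ−2}. -/
/-!
For `v = (cosh t)^δ` one has `v' = δ tanh t · v` and `v'' = (δ sech² t + δ² tanh² t) v`.
The double-angle formulas turn the radial coefficient times `tanh t` into
`2b + ι (1 + tanh² t) = 2b + ι (2 - sech² t)`, and with `tanh² = 1 - sech²` the left-hand side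
collapses to `-δ(δ - 1 + ι) sech² t · v = -δ(δ - 1 + ι) (cosh t)^(δ - 2)`.
-/

open Real

theorem Real.hasDerivAt_tanh (x : ℝ) : HasDerivAt tanh (cosh x ^ 2)⁻¹ x := by
  have h := (hasDerivAt_sinh x).div (hasDerivAt_cosh x) (cosh_pos x).ne'
  rw [← sq, ← sq, cosh_sq_sub_sinh_sq, one_div] at h
  rwa [show tanh = sinh / cosh from funext tanh_eq_sinh_div_cosh]

theorem Real.tanh_sq (x : ℝ) : tanh x ^ 2 = 1 - (cosh x ^ 2)⁻¹ := by
  have := (cosh_pos x).ne'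
  rw [tanh_eq_sinh_div_cosh, div_pow, sinh_sq]
  field_simp

noncomputable def radialCoeff (b ι t : ℝ) : ℝ :=
  2 * b * (cosh t / sinh t) + 2 * ι * (cosh (2 * t) / sinh (2 * t))

theorem radialCoeff_mul_tanh (b ι : ℝ) {t : ℝ} (ht : t ≠ 0) :
    radialCoeff b ι t * tanh t = 2 * b + ι * (2 - (cosh t ^ 2)⁻¹) := by
  have hC := (cosh_pos t).ne'
  have hS : sinh t ≠ 0 := sinh_ne_zero.mpr ht
  rw [radialCoeff, cosh_two_mul, sinh_two_mul, tanh_eq_sinh_div_cosh, sinh_sq]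
  field_simp
  ring

noncomputable def coshPow (δ : ℂ) (s : ℝ) : ℂ := Complex.exp (δ * Real.log (cosh s))

theorem hasDerivAt_coshPow (δ : ℂ) (s : ℝ) :
    HasDerivAt (coshPow δ) (δ * tanh s * coshPow δ s) s := by
  have h := (((hasDerivAt_cosh s).log (cosh_pos s).ne').ofReal_comp.const_mul δ).cexp
  rw [← tanh_eq_sinh_div_cosh] at h
  exact h.congr_deriv (mul_comm _ _)

theorem deriv_coshPow (δ : ℂ) : deriv (coshPow δ) = fun s => δ * tanh s * coshPow δ s :=
  funext fun s => (hasDerivAt_coshPow δ s).deriv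

theorem deriv_deriv_coshPow (δ : ℂ) (s : ℝ) :
    deriv (deriv (coshPow δ)) s
      = (δ * ((cosh s ^ 2)⁻¹ : ℝ) + δ ^ 2 * tanh s ^ 2) * coshPow δ s := by
  rw [deriv_coshPow]
  refine (((hasDerivAt_tanh s).ofReal_comp.const_mul δ).mul
    (hasDerivAt_coshPow δ s)).deriv.trans ?_
  ring

theorem coshPow_sub_two (δ : ℂ) (s : ℝ) :
    coshPow (δ - 2) s = coshPow δ s * ((cosh s ^ 2)⁻¹ : ℝ) := by
  have hexp : Complex.exp (Real.log (cosh s)) = cosh s := by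
    rw [← Complex.ofReal_exp, exp_log (cosh_pos s)]
  rw [coshPow, coshPow, sub_mul, Complex.exp_sub, two_mul, Complex.exp_add, hexp]
  push_cast
  ring

theorem rank_one_BS_cosh_general (b ι : ℝ) (t : ℝ) (ht : 0 < t) (δ : ℂ) :
    deriv (deriv (fun s : ℝ => Complex.exp (δ * (Real.log (Real.cosh s) : ℂ)))) t
      + ((2 * b * (Real.cosh t / Real.sinh t)
            + 2 * ι * (Real.cosh (2 * t) / Real.sinh (2 * t)) : ℝ) : ℂ)
          * deriv (fun s : ℝ => Complex.exp (δ * (Real.log (Real.cosh s) : ℂ))) t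
      - δ * (δ + 2 * ((b : ℂ) + (ι : ℂ)))
          * Complex.exp (δ * (Real.log (Real.cosh t) : ℂ))
    = -(δ * (δ - 1 + (ι : ℂ)))
        * Complex.exp ((δ - 2) * (Real.log (Real.cosh t) : ℂ)) := by
  change deriv (deriv (coshPow δ)) t + (radialCoeff b ι t : ℂ) * deriv (coshPow δ) t
    - _ * coshPow δ t = _ * coshPow (δ - 2) t
  rw [deriv_deriv_coshPow, deriv_coshPow, coshPow_sub_two]
  have hT : ((tanh t : ℝ) : ℂ) ^ 2 = 1 - ((cosh t ^ 2)⁻¹ : ℝ) := by exact_mod_cast tanh_sq t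
  have hcoeff : (radialCoeff b ι t : ℂ) * tanh t = 2 * b + ι * (2 - ((cosh t ^ 2)⁻¹ : ℝ)) := by
    exact_mod_cast radialCoeff_mul_tanh b ι ht.ne'
  linear_combination (δ ^ 2 * coshPow δ t) * hT + (δ * coshPow δ t) * hcoeff

/-- Rank-one Bernstein–Sato identity for `v(t) = (cosh t)^δ`, `t > 0`:
`v'' + (2b coth t + 2ι coth 2t) v' − δ(δ+2ρ) v = −δ(δ−1+ι)(cosh t)^{δ−2}`,
where `ρ = b + ι`. -/
theorem rank_one_BS_cosh (b ι : ℝ) (hb : 0 ≤ b) (hι : 0 ≤ ι) (t : ℝ) (ht : 0 < t) (δ : ℂ) :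
    deriv (deriv (fun s : ℝ => Complex.exp (δ * (Real.log (Real.cosh s) : ℂ)))) t
      + ((2 * b * (Real.cosh t / Real.sinh t)
            + 2 * ι * (Real.cosh (2 * t) / Real.sinh (2 * t)) : ℝ) : ℂ)
          * deriv (fun s : ℝ => Complex.exp (δ * (Real.log (Real.cosh s) : ℂ))) t
      - δ * (δ + 2 * ((b : ℂ) + (ι : ℂ)))
          * Complex.exp (δ * (Real.log (Real.cosh t) : ℂ))
    = -(δ * (δ - 1 + (ι : ℂ)))
        * Complex.exp ((δ - 2) * (Real.log (Real.cosh t) : ℂ)) :=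
  rank_one_BS_cosh_general b ι t ht δ
end

section
/- Let a group G act on a set X transitively, let o ∈ X, let K = Stab_G(o) be the stabilizer of o, and let y₀ ⊆ X be a subset containing o. Suppose there is a subgroup G₀ ≤ G with g·y₀ = y₀ for all g ∈ G₀ and such that G₀ acts transitively on y₀ (i.e. for each z ∈ y₀ there is g ∈ G₀ with z = g·o). Then {g·y₀ : g ∈ G, o ∈ g·y₀} = {k·y₀ : k ∈ K}. -/
open Pointwise

/-- The translates of `y₀` through the base point `o` are exactly the
`K`-translates of `y₀`, where `K = Stab_G(o)`: if `G` acts transitively on `X`,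
`o ∈ y₀`, and `G₀` is a subgroup stabilizing the set `y₀` and acting
transitively on it, then `{g • y₀ : o ∈ g • y₀} = {k • y₀ : k ∈ Stab_G(o)}`. -/
theorem translates_through_basepoint {G X : Type*} [Group G] [MulAction G X]
    (o : X) (y₀ : Set X) (ho : o ∈ y₀)
    (htr : ∀ x : X, ∃ g : G, g • o = x)
    (G₀ : Subgroup G) (hstab : ∀ g ∈ G₀, g • y₀ = y₀)
    (htr0 : ∀ z ∈ y₀, ∃ g ∈ G₀, z = g • o) :
    {S : Set X | ∃ g : G, S = g • y₀ ∧ o ∈ g • y₀}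
      = {S : Set X | ∃ k ∈ MulAction.stabilizer G o, S = k • y₀} := by
  ext S
  simp only [Set.mem_setOf_eq]
  constructor
  · rintro ⟨g, rfl, hoS⟩
    obtain ⟨z, hz, hz'⟩ := hoS
    -- z ∈ y₀, g • z = o
    obtain ⟨h, hh, hhz⟩ := htr0 z hz
    refine ⟨g * h, ?_, ?_⟩
    · have : (g * h) • o = o := by rw [mul_smul, ← hhz]; exact hz'
      exact this
    · rw [mul_smul, hstab h hh]
  · rintro ⟨k, hk, rfl⟩
    refine ⟨k, rfl, ⟨o, ho, ?_⟩⟩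
    exact hk
end
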